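/- Let x be k-sparse, 1 < q < ∞, and suppose ‖w‖₂ ≤ ε where y = Ax + w. If x̂ solves the basis pursuit min ‖z‖₁ s.t. ‖y − Az‖₂ ≤ ε, then ‖x̂ − x‖_q ≤ 2ε / ρ_{q, 2^{q/(q−1)} k}(A) and ‖x̂ − x‖₁ ≤ 4 k^{1−1/q} ε / ρ_{q, 2^{q/(q−1)} k}(A), provided ρ_{q, 2^{q/(q−1)} k}(A) > 0. -/

import Mathlib

open Finset Matrix

noncomputable def l1 {N : ℕ} (z : Fin N → ℝ) : ℝ := ∑ i, |z i|
noncomputable def lq {N : ℕ} (q : ℝ) (z : Fin N → ℝ) : ℝ := (∑ i, |z i| ^ q) ^ (1/q)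
noncomputable def l2 {m : ℕ} (v : Fin m → ℝ) : ℝ := Real.sqrt (∑ i, (v i)^2)
noncomputable def linf {N : ℕ} (z : Fin N → ℝ) : ℝ := ⨆ i, |z i|
open scoped Classical in
noncomputable def l0 {N : ℕ} (z : Fin N → ℝ) : ℕ := (Finset.univ.filter (fun i => z i ≠ 0)).card
noncomputable def sparsityQ {N : ℕ} (q : ℝ) (z : Fin N → ℝ) : ℝ := (l1 z / lq q z) ^ (q/(q-1))
noncomputable def cmsv {m N : ℕ} (q s : ℝ) (A : Matrix (Fin m) (Fin N) ℝ) : ℝ :=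
  sInf { r | ∃ z : Fin N → ℝ, z ≠ 0 ∧ sparsityQ q z ≤ s ∧ r = l2 (A.mulVec z) / lq q z }

/-!
The error `h = x̂ - x` satisfies two constraints. Since `x` is feasible and `x̂` minimises the
`ℓ₁` norm, `h` lies in the cone `‖h_{Sᶜ}‖₁ ≤ ‖h_S‖₁` over the support `S` of `x`, so by Hölder
`‖h‖₁ ≤ 2 k^{1-1/q} ‖h‖_q`, i.e. `s_q(h) ≤ 2^{q/(q-1)} k`. Since both `x` and `x̂` are feasible,
`‖A h‖₂ ≤ 2ε`. The definition of `ρ` as an infimum then gives `ρ ‖h‖_q ≤ ‖A h‖₂ ≤ 2ε`, and the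
`ℓ₁` bound follows from the cone inequality.
-/

section Norms

variable {N : ℕ}

lemma l2_eq_norm {m : ℕ} (v : Fin m → ℝ) : l2 v = ‖(WithLp.equiv 2 (Fin m → ℝ)).symm v‖ := by
  simp [EuclideanSpace.norm_eq, l2, sq_abs]

lemma l2_nonneg {m : ℕ} (v : Fin m → ℝ) : 0 ≤ l2 v := Real.sqrt_nonneg _

lemma l2_zero {m : ℕ} : l2 (0 : Fin m → ℝ) = 0 := by simp [l2]

lemma l2_sub_le {m : ℕ} (a b : Fin m → ℝ) : l2 (a - b) ≤ l2 a + l2 b := by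
  simp only [l2_eq_norm]
  exact norm_sub_le _ _

lemma l1_nonneg (z : Fin N → ℝ) : 0 ≤ l1 z := sum_nonneg fun _ _ => abs_nonneg _

lemma lq_nonneg (q : ℝ) (z : Fin N → ℝ) : 0 ≤ lq q z :=
  Real.rpow_nonneg (sum_nonneg fun _ _ => Real.rpow_nonneg (abs_nonneg _) _) _

lemma lq_zero {q : ℝ} (hq : q ≠ 0) : lq q (0 : Fin N → ℝ) = 0 := by
  simp [lq, Real.zero_rpow hq, hq]

lemma lq_pos {q : ℝ} {z : Fin N → ℝ} (hz : z ≠ 0) : 0 < lq q z := by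
  obtain ⟨i, hi⟩ := Function.ne_iff.1 hz
  refine Real.rpow_pos_of_pos (sum_pos' (fun j _ => Real.rpow_nonneg (abs_nonneg _) _)
    ⟨i, mem_univ i, Real.rpow_pos_of_pos (abs_pos.2 hi) q⟩) _

end Norms

section Cone

variable {N : ℕ} {x h : Fin N → ℝ}

lemma l1_le_two_mul_sum_abs_of_l1_add_le {S : Finset (Fin N)} (hS : ∀ i ∉ S, x i = 0)
    (hxh : l1 (x + h) ≤ l1 x) : l1 h ≤ 2 * ∑ i ∈ S, |h i| := by
  have hsplit (z : Fin N → ℝ) : l1 z = ∑ i ∈ S, |z i| + ∑ i ∈ Sᶜ, |z i| :=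
    (sum_add_sum_compl S _).symm
  have hx : ∑ i ∈ Sᶜ, |x i| = 0 :=
    sum_eq_zero fun i hi => by rw [hS i (mem_compl.1 hi), abs_zero]
  have hxh_off : ∑ i ∈ Sᶜ, |(x + h) i| = ∑ i ∈ Sᶜ, |h i| :=
    sum_congr rfl fun i hi => by rw [Pi.add_apply, hS i (mem_compl.1 hi), zero_add]
  have hxh_on : ∑ i ∈ S, |x i| - ∑ i ∈ S, |h i| ≤ ∑ i ∈ S, |(x + h) i| := by
    rw [← sum_sub_distrib]
    exact sum_le_sum fun i _ => by
      simpa using abs_sub_abs_le_abs_sub (x i) (-h i)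
  rw [hsplit (x + h), hxh_off, hsplit x, hx] at hxh
  rw [hsplit h]
  linarith

lemma sum_abs_le_card_rpow_mul_lq {q : ℝ} (hq : 1 < q) (S : Finset (Fin N)) (z : Fin N → ℝ) :
    ∑ i ∈ S, |z i| ≤ (#S : ℝ) ^ (1 - 1/q) * lq q z := by
  have hpq : (q/(q-1)).HolderConjugate q := (Real.HolderConjugate.conjExponent hq).symm
  have hholder := Real.inner_le_Lp_mul_Lq S (fun _ => (1:ℝ)) (fun i => |z i|) hpq
  have hp : 1 / (q/(q-1)) = 1 - 1/q := by field_simp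
  simp only [one_mul, abs_one, Real.one_rpow, sum_const, nsmul_eq_mul, mul_one, abs_abs,
    hp] at hholder
  refine hholder.trans (mul_le_mul_of_nonneg_left ?_ (by positivity))
  exact Real.rpow_le_rpow (sum_nonneg fun i _ => by positivity)
    (sum_le_sum_of_subset_of_nonneg (subset_univ S) fun i _ _ => by positivity) (by positivity)

lemma l1_le_two_mul_rpow_mul_lq_of_l1_add_le {k : ℕ} {q : ℝ} (hq : 1 < q) (hx : l0 x ≤ k)
    (hxh : l1 (x + h) ≤ l1 x) : l1 h ≤ 2 * (k : ℝ) ^ (1 - 1/q) * lq q h := by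
  classical
  set S := univ.filter fun i => x i ≠ 0
  have hS : ∀ i ∉ S, x i = 0 := by simp [S]
  have hcard : (#S : ℝ) ^ (1 - 1/q) ≤ (k : ℝ) ^ (1 - 1/q) :=
    Real.rpow_le_rpow (Nat.cast_nonneg _) (by exact_mod_cast hx)
      (sub_nonneg.2 ((div_le_one (by linarith)).2 hq.le))
  calc l1 h ≤ 2 * ∑ i ∈ S, |h i| := l1_le_two_mul_sum_abs_of_l1_add_le hS hxh
    _ ≤ 2 * ((#S : ℝ) ^ (1 - 1/q) * lq q h) := by gcongr; exact sum_abs_le_card_rpow_mul_lq hq S h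
    _ ≤ 2 * (k : ℝ) ^ (1 - 1/q) * lq q h := by
      rw [← mul_assoc]; gcongr; exact lq_nonneg q h

end Cone

lemma sparsityQ_le_rpow_of_l1_le {N : ℕ} {q c : ℝ} {z : Fin N → ℝ} (hq : 1 < q) (hc : 0 ≤ c)
    (hz : l1 z ≤ c * lq q z) : sparsityQ q z ≤ c ^ (q/(q-1)) :=
  Real.rpow_le_rpow (div_nonneg (l1_nonneg z) (lq_nonneg q z))
    (div_le_of_le_mul₀ (lq_nonneg q z) hc hz) (div_nonneg (by linarith) (by linarith))

lemma cmsv_mul_lq_le {m N : ℕ} {q s : ℝ} (hq : q ≠ 0) (A : Matrix (Fin m) (Fin N) ℝ)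
    {z : Fin N → ℝ} (hz : sparsityQ q z ≤ s) : cmsv q s A * lq q z ≤ l2 (A.mulVec z) := by
  rcases eq_or_ne z 0 with rfl | hz0
  · simp [lq_zero hq, l2_zero]
  have hbdd : BddBelow { r | ∃ z : Fin N → ℝ, z ≠ 0 ∧ sparsityQ q z ≤ s ∧
      r = l2 (A.mulVec z) / lq q z } := by
    refine ⟨0, ?_⟩
    rintro r ⟨z, -, -, rfl⟩
    exact div_nonneg (l2_nonneg _) (lq_nonneg _ _)
  exact (le_div_iff₀ (lq_pos hz0)).1 (csInf_le hbdd ⟨z, hz0, hz, rfl⟩)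

lemma l2_mulVec_sub_le_of_feasible {m N : ℕ} (A : Matrix (Fin m) (Fin N) ℝ) {x xh : Fin N → ℝ}
    {y : Fin m → ℝ} {ε : ℝ} (hx : l2 (y - A.mulVec x) ≤ ε) (hxh : l2 (y - A.mulVec xh) ≤ ε) :
    l2 (A.mulVec (xh - x)) ≤ 2 * ε := by
  have heq : A.mulVec (xh - x) = (y - A.mulVec x) - (y - A.mulVec xh) := by
    rw [Matrix.mulVec_sub]; abel
  rw [heq]
  linarith [l2_sub_le (y - A.mulVec x) (y - A.mulVec xh)]

theorem stmt12 {m N k : ℕ} (A : Matrix (Fin m) (Fin N) ℝ)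
    (x xh : Fin N → ℝ) (w y : Fin m → ℝ) (ε : ℝ)
    (hy : y = A.mulVec x + w) (hw : l2 w ≤ ε)
    (hx : l0 x ≤ k) (q : ℝ) (hq : 1 < q)
    (hfeas : l2 (y - A.mulVec xh) ≤ ε)
    (hmin : ∀ z : Fin N → ℝ, l2 (y - A.mulVec z) ≤ ε → l1 xh ≤ l1 z)
    (hρ : 0 < cmsv q ((2:ℝ) ^ (q/(q-1)) * (k : ℝ)) A) :
    lq q (xh - x) ≤ 2 * ε / cmsv q ((2:ℝ) ^ (q/(q-1)) * (k : ℝ)) A ∧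
      l1 (xh - x) ≤ 4 * (k : ℝ) ^ (1 - 1/q) * ε / cmsv q ((2:ℝ) ^ (q/(q-1)) * (k : ℝ)) A := by
  set ρ := cmsv q ((2:ℝ) ^ (q/(q-1)) * (k : ℝ)) A
  have hxfeas : l2 (y - A.mulVec x) ≤ ε := by rwa [hy, add_sub_cancel_left]
  have hcone : l1 (xh - x) ≤ 2 * (k : ℝ) ^ (1 - 1/q) * lq q (xh - x) :=
    l1_le_two_mul_rpow_mul_lq_of_l1_add_le hq hx (by simpa using hmin x hxfeas)
  have hexp : (2 * (k : ℝ) ^ (1 - 1/q)) ^ (q/(q-1)) = (2:ℝ) ^ (q/(q-1)) * k := by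
    have : q - 1 ≠ 0 := by linarith
    rw [Real.mul_rpow (by norm_num) (by positivity), ← Real.rpow_mul (Nat.cast_nonneg k),
      show (1 - 1/q) * (q/(q-1)) = 1 by field_simp, Real.rpow_one]
  have hsp : sparsityQ q (xh - x) ≤ (2:ℝ) ^ (q/(q-1)) * k :=
    hexp ▸ sparsityQ_le_rpow_of_l1_le hq (by positivity) hcone
  have hlq : lq q (xh - x) ≤ 2 * ε / ρ := by
    rw [le_div_iff₀ hρ, mul_comm]
    exact (cmsv_mul_lq_le (by linarith) A hsp).trans
      (l2_mulVec_sub_le_of_feasible A hxfeas hfeas)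
  refine ⟨hlq, ?_⟩
  calc l1 (xh - x) ≤ 2 * (k : ℝ) ^ (1 - 1/q) * lq q (xh - x) := hcone
    _ ≤ 2 * (k : ℝ) ^ (1 - 1/q) * (2 * ε / ρ) := by gcongr
    _ = 4 * (k : ℝ) ^ (1 - 1/q) * ε / ρ := by ring
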